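/- Let R be a principal ideal domain, let n ∈ R be nonzero, and let n = a·b be a factorization into coprime elements a, b ∈ R, say u·a + v·b = 1. Write S = R/nR and let ā, b̄, ū, v̄ ∈ S be the residues of a, b, u, v. Let I ⊆ S[x₁,…,xₛ] be an ideal. Let G_a = (g_{a,k})_{k∈K} be a finite family of nonzero polynomials in S[x₁,…,xₛ] such that π_a(G_a) is a strong Gröbner basis of π_a(I) ⊆ (R/aR)[x₁,…,xₛ], the constant ā is a member of G_a, and for every member g of G_a other than ā the leading coefficient lc(g) divides ā in S and ā does not divide lc(g) in S. Let G_b = (g_{b,l})_{l∈L} be a finite family with the analogous properties with respect to b. For k ∈ K and l ∈ L put δ_{k,l} = lm(g_{a,k}) ⊔ lm(g_{b,l}) (componentwise maximum) and define f_{k,l} = ū·ā·lc(g_{a,k})·X^{δ_{k,l} − lm(g_{b,l})}·g_{b,l} + v̄·b̄·lc(g_{b,l})·X^{δ_{k,l} − lm(g_{a,k})}·g_{a,k}. Then G = { f_{k,l} : k ∈ K, l ∈ L } is a strong Gröbner basis of I. -/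

import Mathlib

open MvPolynomial

/-- The leading monomial (largest exponent vector of the support) of a multivariate
polynomial with respect to a monomial order. -/
noncomputable def MonomialOrder.lm {σ R : Type*} [CommSemiring R] (m : MonomialOrder σ)
    (f : MvPolynomial σ R) : σ →₀ ℕ :=
  m.toSyn.symm (f.support.sup fun d => m.toSyn d)

/-- The leading coefficient of a multivariate polynomial with respect to a monomial order. -/
noncomputable def MonomialOrder.lc {σ R : Type*} [CommSemiring R] (m : MonomialOrder σ)
    (f : MvPolynomial σ R) : R :=
  f.coeff (m.lm f)

/-- `G` is a strong Gröbner basis of an ideal `I` w.r.t. the monomial order `m` if `G ⊆ I`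
and for every nonzero `f ∈ I` there is a nonzero `g ∈ G` whose leading term divides the
leading term of `f`, i.e. `lm g ≤ lm f` componentwise and `lc g ∣ lc f`. -/
def MonomialOrder.IsStrongGroebnerBasis {σ R : Type*} [CommSemiring R] (m : MonomialOrder σ)
    (G : Set (MvPolynomial σ R)) (I : Ideal (MvPolynomial σ R)) : Prop :=
  (∀ g ∈ G, g ∈ I) ∧
    ∀ f ∈ I, f ≠ 0 → ∃ g ∈ G, g ≠ 0 ∧ m.lm g ≤ m.lm f ∧ m.lc g ∣ m.lc f

/-!
By the Chinese remainder theorem `S = R/nR` splits as `R/aR × R/bR`, and `ū·ā`, `v̄·b̄` are the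
idempotents of the two factors. Modulo `a` the polynomial `f_{k,l}` is a monomial multiple of
`g_{a,k}`, modulo `b` one of `g_{b,l}`, so it lies in `I`; its leading term is
`lc(g_{a,k})·lc(g_{b,l})·X^δ`. Given `f ∈ I`, choose `g_{a,k}` whose image modulo `a` has leading
term dividing that of `f` (or `g_{a,k} = ā` when `ā ∣ lc f`), and `g_{b,l}` likewise. As
`lc(g_{a,k})` divides `ā`, it is a unit modulo `b`, and symmetrically; so
`lc(g_{a,k})·lc(g_{b,l})` divides `lc f` modulo `a` and modulo `b`, hence in `S`.
-/

namespace MonomialOrder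

variable {σ : Type*} (m : MonomialOrder σ) {A B : Type*} [CommSemiring A] [CommSemiring B]

theorem lm_eq_degree (f : MvPolynomial σ A) : m.lm f = m.degree f := rfl

theorem lc_eq_leadingCoeff (f : MvPolynomial σ A) : m.lc f = m.leadingCoeff f := rfl

theorem degree_map_of_map_leadingCoeff_ne_zero {φ : A →+* B} {f : MvPolynomial σ A}
    (h : φ (m.leadingCoeff f) ≠ 0) : m.degree (map φ f) = m.degree f :=
  m.toSyn.injective <| le_antisymm
    (m.degree_le_iff.2 fun _ hd => m.le_degree (support_map_subset _ _ hd))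
    (m.le_degree (by rwa [mem_support_iff, coeff_map]))

theorem leadingCoeff_map_of_map_leadingCoeff_ne_zero {φ : A →+* B} {f : MvPolynomial σ A}
    (h : φ (m.leadingCoeff f) ≠ 0) : m.leadingCoeff (map φ f) = φ (m.leadingCoeff f) := by
  rw [leadingCoeff, m.degree_map_of_map_leadingCoeff_ne_zero h, coeff_map, leadingCoeff]

theorem degree_monomial_tsub_mul_le {f : MvPolynomial σ A} {d : σ →₀ ℕ}
    (h : m.degree f ≤ d) (c : A) : m.degree (monomial (d - m.degree f) c * f) ≼[m] d :=
  calc m.toSyn (m.degree (monomial (d - m.degree f) c * f))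
      ≤ m.toSyn (m.degree (monomial (d - m.degree f) c)) + m.toSyn (m.degree f) := by
        simpa only [map_add] using m.degree_mul_le
    _ ≤ m.toSyn (d - m.degree f) + m.toSyn (m.degree f) :=
        add_le_add_left (m.degree_monomial_le c) _
    _ = m.toSyn d := by rw [← map_add, tsub_add_cancel_of_le h]

theorem coeff_monomial_tsub_mul {f : MvPolynomial σ A} {d : σ →₀ ℕ}
    (h : m.degree f ≤ d) (c : A) :
    (monomial (d - m.degree f) c * f).coeff d = c * m.leadingCoeff f := by
  have := coeff_monomial_mul (m.degree f) (d - m.degree f) c f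
  rwa [tsub_add_cancel_of_le h] at this

/-- The polynomial `f_{k,l}` of the paper, for `p = g_{a,k}`, `q = g_{b,l}`, `e₁ = ū·ā` and
`e₂ = v̄·b̄`. -/
noncomputable def recombination (e₁ e₂ : A) (p q : MvPolynomial σ A) : MvPolynomial σ A :=
  monomial (m.lm p ⊔ m.lm q - m.lm q) (e₁ * m.lc p) * q
    + monomial (m.lm p ⊔ m.lm q - m.lm p) (e₂ * m.lc q) * p

variable {e₁ e₂ : A} {p q : MvPolynomial σ A}

theorem degree_recombination_le :
    m.degree (m.recombination e₁ e₂ p q) ≼[m] m.degree p ⊔ m.degree q :=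
  m.degree_add_le.trans <| sup_le
    (m.degree_monomial_tsub_mul_le le_sup_right _) (m.degree_monomial_tsub_mul_le le_sup_left _)

theorem coeff_recombination_sup (he : e₁ + e₂ = 1) :
    (m.recombination e₁ e₂ p q).coeff (m.degree p ⊔ m.degree q) =
      m.leadingCoeff p * m.leadingCoeff q := by
  rw [recombination, coeff_add, lm_eq_degree, lm_eq_degree,
    m.coeff_monomial_tsub_mul le_sup_right, m.coeff_monomial_tsub_mul le_sup_left]
  calc e₁ * m.leadingCoeff p * m.leadingCoeff q + e₂ * m.leadingCoeff q * m.leadingCoeff p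
      = (e₁ + e₂) * (m.leadingCoeff p * m.leadingCoeff q) := by ring
    _ = m.leadingCoeff p * m.leadingCoeff q := by rw [he, one_mul]

theorem degree_recombination (he : e₁ + e₂ = 1)
    (h : m.leadingCoeff p * m.leadingCoeff q ≠ 0) :
    m.degree (m.recombination e₁ e₂ p q) = m.degree p ⊔ m.degree q :=
  m.toSyn.injective <| le_antisymm m.degree_recombination_le
    (m.le_degree (by rwa [mem_support_iff, m.coeff_recombination_sup he]))

theorem leadingCoeff_recombination (he : e₁ + e₂ = 1)
    (h : m.leadingCoeff p * m.leadingCoeff q ≠ 0) :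
    m.leadingCoeff (m.recombination e₁ e₂ p q) = m.leadingCoeff p * m.leadingCoeff q := by
  rw [leadingCoeff, m.degree_recombination he h, m.coeff_recombination_sup he]

end MonomialOrder

/-- `(φ₁, φ₂) : S → T₁ × T₂` is a ring isomorphism, and `e₁`, `e₂` are the idempotents of `S`
corresponding to `(0, 1)` and `(1, 0)`. -/
structure IsCRTSplitting {S T₁ T₂ : Type*} [CommRing S] [CommRing T₁] [CommRing T₂]
    (φ₁ : S →+* T₁) (φ₂ : S →+* T₂) (e₁ e₂ : S) : Prop where
  surjective₁ : Function.Surjective φ₁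
  surjective₂ : Function.Surjective φ₂
  eq_zero_of_map_eq_zero : ∀ x, φ₁ x = 0 → φ₂ x = 0 → x = 0
  add_eq_one : e₁ + e₂ = 1
  map₁_fst : φ₁ e₁ = 0
  map₂_snd : φ₂ e₂ = 0

namespace IsCRTSplitting

variable {S T₁ T₂ : Type*} [CommRing S] [CommRing T₁] [CommRing T₂]
  {φ₁ : S →+* T₁} {φ₂ : S →+* T₂} {e₁ e₂ : S}

theorem symm (h : IsCRTSplitting φ₁ φ₂ e₁ e₂) : IsCRTSplitting φ₂ φ₁ e₂ e₁ where
  surjective₁ := h.surjective₂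
  surjective₂ := h.surjective₁
  eq_zero_of_map_eq_zero x h₂ h₁ := h.eq_zero_of_map_eq_zero x h₁ h₂
  add_eq_one := by rw [add_comm, h.add_eq_one]
  map₁_fst := h.map₂_snd
  map₂_snd := h.map₁_fst

variable (h : IsCRTSplitting φ₁ φ₂ e₁ e₂)
include h

theorem map₁_snd : φ₁ e₂ = 1 := by
  rw [← zero_add (φ₁ e₂), ← h.map₁_fst, ← map_add, h.add_eq_one, map_one]

theorem map₂_fst : φ₂ e₁ = 1 :=
  h.symm.map₁_snd

theorem eq_of_map_eq {x y : S} (h₁ : φ₁ x = φ₁ y) (h₂ : φ₂ x = φ₂ y) : x = y :=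
  sub_eq_zero.1 <| h.eq_zero_of_map_eq_zero _ (by rw [map_sub, h₁, sub_self])
    (by rw [map_sub, h₂, sub_self])

theorem map₁_glue (s t : S) : φ₁ (e₂ * s + e₁ * t) = φ₁ s := by
  simp [h.map₁_fst, h.map₁_snd]

theorem map₂_glue (s t : S) : φ₂ (e₂ * s + e₁ * t) = φ₂ t := by
  simp [h.map₂_fst, h.map₂_snd]

theorem dvd_of_map_dvd {x y : S} (h₁ : φ₁ x ∣ φ₁ y) (h₂ : φ₂ x ∣ φ₂ y) : x ∣ y := by
  obtain ⟨s₁, hs⟩ := h₁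
  obtain ⟨s₂, ht⟩ := h₂
  obtain ⟨s, rfl⟩ := h.surjective₁ s₁
  obtain ⟨t, rfl⟩ := h.surjective₂ s₂
  exact ⟨e₂ * s + e₁ * t, h.eq_of_map_eq (by rw [map_mul, h.map₁_glue, hs])
    (by rw [map_mul, h.map₂_glue, ht])⟩

theorem mem_of_map_mem {I : Ideal S} {f : S} (h₁ : φ₁ f ∈ I.map φ₁) (h₂ : φ₂ f ∈ I.map φ₂) :
    f ∈ I := by
  obtain ⟨s, hs, hs₁⟩ := (Ideal.mem_map_iff_of_surjective φ₁ h.surjective₁).1 h₁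
  obtain ⟨t, ht, ht₂⟩ := (Ideal.mem_map_iff_of_surjective φ₂ h.surjective₂).1 h₂
  rw [h.eq_of_map_eq (x := f) (y := e₂ * s + e₁ * t) (by rw [h.map₁_glue, hs₁])
    (by rw [h.map₂_glue, ht₂])]
  exact I.add_mem (I.mul_mem_left _ hs) (I.mul_mem_left _ ht)

theorem fst_dvd_of_map₁_eq_zero {x : S} (hx : φ₁ x = 0) : e₁ ∣ x :=
  ⟨x, h.eq_of_map_eq (by rw [map_mul, hx, mul_zero]) (by rw [map_mul, h.map₂_fst, one_mul])⟩

theorem isUnit_map₂_of_dvd_fst {x : S} (hx : x ∣ e₁) : IsUnit (φ₂ x) :=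
  isUnit_of_dvd_one (h.map₂_fst ▸ map_dvd φ₂ hx)

theorem mvPolynomialMap (σ : Type*) :
    IsCRTSplitting (map φ₁ : MvPolynomial σ S →+* _) (map φ₂) (C e₁) (C e₂) where
  surjective₁ := map_surjective _ h.surjective₁
  surjective₂ := map_surjective _ h.surjective₂
  eq_zero_of_map_eq_zero f h₁ h₂ := by
    ext d
    exact h.eq_zero_of_map_eq_zero _ (by rw [← coeff_map, h₁, coeff_zero])
      (by rw [← coeff_map, h₂, coeff_zero])
  add_eq_one := by rw [← map_add, h.add_eq_one, map_one]
  map₁_fst := by rw [map_C, h.map₁_fst, map_zero]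
  map₂_snd := by rw [map_C, h.map₂_snd, map_zero]

end IsCRTSplitting

namespace IsCRTSplitting

variable {σ S T₁ T₂ : Type*} [CommRing S] [CommRing T₁] [CommRing T₂]
  {φ₁ : S →+* T₁} {φ₂ : S →+* T₂} {e₁ e₂ : S} (m : MonomialOrder σ)
  (h : IsCRTSplitting φ₁ φ₂ e₁ e₂)
include h

theorem recombination_mem {I : Ideal (MvPolynomial σ S)} {p q : MvPolynomial σ S}
    (hp : map φ₁ p ∈ I.map (map φ₁)) (hq : map φ₂ q ∈ I.map (map φ₂)) :
    m.recombination e₁ e₂ p q ∈ I := by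
  refine (h.mvPolynomialMap σ).mem_of_map_mem ?_ ?_ <;>
    simp only [MonomialOrder.recombination, map_add, map_mul, map_monomial, h.map₁_fst,
      h.map₁_snd, h.map₂_fst, h.map₂_snd, zero_mul, one_mul, monomial_zero, zero_add, add_zero]
  · exact Ideal.mul_mem_left _ _ hp
  · exact Ideal.mul_mem_left _ _ hq

theorem recombination_ne_zero_and_lm_le_and_lc_dvd {f p q : MvPolynomial σ S} (hf : f ≠ 0)
    (hp : m.lm p ≤ m.lm f) (hq : m.lm q ≤ m.lm f)
    (hp₁ : φ₁ (m.lc p) ∣ φ₁ (m.lc f)) (hp₂ : IsUnit (φ₂ (m.lc p)))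
    (hq₂ : φ₂ (m.lc q) ∣ φ₂ (m.lc f)) (hq₁ : IsUnit (φ₁ (m.lc q))) :
    m.recombination e₁ e₂ p q ≠ 0 ∧ m.lm (m.recombination e₁ e₂ p q) ≤ m.lm f ∧
      m.lc (m.recombination e₁ e₂ p q) ∣ m.lc f := by
  have hdvd : m.lc p * m.lc q ∣ m.lc f := h.dvd_of_map_dvd
    (by rwa [map_mul, hq₁.mul_right_dvd]) (by rwa [map_mul, hp₂.mul_left_dvd])
  have hne : m.leadingCoeff p * m.leadingCoeff q ≠ 0 := fun h₀ =>
    m.leadingCoeff_ne_zero_iff.2 hf (zero_dvd_iff.1 (h₀ ▸ hdvd))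
  rw [m.lm_eq_degree (m.recombination e₁ e₂ p q),
    m.lc_eq_leadingCoeff (m.recombination e₁ e₂ p q), m.degree_recombination h.add_eq_one hne,
    m.leadingCoeff_recombination h.add_eq_one hne]
  exact ⟨fun h₀ => hne (by rw [← m.leadingCoeff_recombination h.add_eq_one hne, h₀,
    m.leadingCoeff_zero]), sup_le hp hq, hdvd⟩

end IsCRTSplitting

namespace MonomialOrder.IsStrongGroebnerBasis

variable {σ S T K : Type*} [CommRing S] [CommRing T] {m : MonomialOrder σ} {φ : S →+* T}
  {I : Ideal (MvPolynomial σ S)} {g : K → MvPolynomial σ S} {α : S}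

theorem exists_lm_le_and_map_lc_dvd
    (hG : m.IsStrongGroebnerBasis ((fun f => map φ f) '' Set.range g) (I.map (map φ)))
    (hα : ∃ k, g k = C α) (hφα : φ α = 0) (hker : ∀ x, φ x = 0 → α ∣ x)
    (hlc : ∀ k, g k ≠ C α → m.lc (g k) ∣ α ∧ ¬ α ∣ m.lc (g k))
    {f : MvPolynomial σ S} (hf : f ∈ I) :
    ∃ k, m.lm (g k) ≤ m.lm f ∧ φ (m.lc (g k)) ∣ φ (m.lc f) ∧ m.lc (g k) ∣ α := by
  by_cases hf₀ : φ (m.leadingCoeff f) = 0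
  · obtain ⟨k, hk⟩ := hα
    refine ⟨k, ?_, ?_, ?_⟩
    · rw [hk, lm_eq_degree, degree_C]
      exact _root_.zero_le
    · rw [hk, lc_eq_leadingCoeff, leadingCoeff_C, hφα]
      exact zero_dvd_iff.2 hf₀
    · rw [hk, lc_eq_leadingCoeff, leadingCoeff_C]
  have hmap₀ : map φ f ≠ 0 := by
    rw [← m.leadingCoeff_ne_zero_iff, m.leadingCoeff_map_of_map_leadingCoeff_ne_zero hf₀]
    exact hf₀
  obtain ⟨_, ⟨_, ⟨k, rfl⟩, rfl⟩, hgk₀, hlm, hlc_dvd⟩ :=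
    hG.2 _ (Ideal.mem_map_of_mem _ hf) hmap₀
  have hk : g k ≠ C α := fun hk => hgk₀ (by simp only [hk, map_C, hφα, map_zero])
  obtain ⟨hkα, hαk⟩ := hlc k hk
  have hφk : φ (m.leadingCoeff (g k)) ≠ 0 := fun h₀ => hαk (hker _ h₀)
  simp only [lm_eq_degree, lc_eq_leadingCoeff, m.degree_map_of_map_leadingCoeff_ne_zero hf₀,
    m.degree_map_of_map_leadingCoeff_ne_zero hφk,
    m.leadingCoeff_map_of_map_leadingCoeff_ne_zero hf₀,
    m.leadingCoeff_map_of_map_leadingCoeff_ne_zero hφk] at hlm hlc_dvd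
  exact ⟨k, hlm, hlc_dvd, hkα⟩

end MonomialOrder.IsStrongGroebnerBasis

section Quotient

variable {R : Type*} [CommRing R] {n a b u v : R}

theorem isCRTSplitting_quotient (hnab : n = a * b) (huv : u * a + v * b = 1)
    {φa : (R ⧸ Ideal.span ({n} : Set R)) →+* R ⧸ Ideal.span ({a} : Set R)}
    (hφa : ∀ r : R, φa (Ideal.Quotient.mk _ r) = Ideal.Quotient.mk _ r)
    {φb : (R ⧸ Ideal.span ({n} : Set R)) →+* R ⧸ Ideal.span ({b} : Set R)}
    (hφb : ∀ r : R, φb (Ideal.Quotient.mk _ r) = Ideal.Quotient.mk _ r) :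
    IsCRTSplitting φa φb (Ideal.Quotient.mk _ (u * a)) (Ideal.Quotient.mk _ (v * b)) where
  surjective₁ y := by
    obtain ⟨r, rfl⟩ := Ideal.Quotient.mk_surjective y
    exact ⟨_, hφa r⟩
  surjective₂ y := by
    obtain ⟨r, rfl⟩ := Ideal.Quotient.mk_surjective y
    exact ⟨_, hφb r⟩
  eq_zero_of_map_eq_zero x ha hb := by
    obtain ⟨r, rfl⟩ := Ideal.Quotient.mk_surjective x
    rw [hφa, Ideal.Quotient.eq_zero_iff_dvd] at ha
    rw [hφb, Ideal.Quotient.eq_zero_iff_dvd] at hb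
    rw [Ideal.Quotient.eq_zero_iff_dvd, hnab]
    exact IsCoprime.mul_dvd ⟨u, v, huv⟩ ha hb
  add_eq_one := by rw [← map_add, huv, map_one]
  map₁_fst := by rw [hφa, Ideal.Quotient.eq_zero_iff_dvd]; exact dvd_mul_left a u
  map₂_snd := by rw [hφb, Ideal.Quotient.eq_zero_iff_dvd]; exact dvd_mul_left b v

end Quotient

theorem strongGroebnerBasis_recombination_quotient_general {σ R : Type*} [CommRing R]
    (m : MonomialOrder σ)
    (n a b u v : R) (hnab : n = a * b) (huv : u * a + v * b = 1)
    (φa : (R ⧸ Ideal.span ({n} : Set R)) →+* R ⧸ Ideal.span ({a} : Set R))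
    (hφa : ∀ r : R, φa (Ideal.Quotient.mk _ r) = Ideal.Quotient.mk _ r)
    (φb : (R ⧸ Ideal.span ({n} : Set R)) →+* R ⧸ Ideal.span ({b} : Set R))
    (hφb : ∀ r : R, φb (Ideal.Quotient.mk _ r) = Ideal.Quotient.mk _ r)
    (I : Ideal (MvPolynomial σ (R ⧸ Ideal.span ({n} : Set R))))
    {K L : Type*}
    (ga : K → MvPolynomial σ (R ⧸ Ideal.span ({n} : Set R)))
    (gb : L → MvPolynomial σ (R ⧸ Ideal.span ({n} : Set R)))
    (hGa : m.IsStrongGroebnerBasis ((fun f => MvPolynomial.map φa f) '' Set.range ga)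
      (I.map (MvPolynomial.map φa)))
    (hGb : m.IsStrongGroebnerBasis ((fun f => MvPolynomial.map φb f) '' Set.range gb)
      (I.map (MvPolynomial.map φb)))
    (haGa : ∃ k, ga k = C (Ideal.Quotient.mk (Ideal.span ({n} : Set R)) a))
    (hbGb : ∃ l, gb l = C (Ideal.Quotient.mk (Ideal.span ({n} : Set R)) b))
    (hlca : ∀ k, ga k ≠ C (Ideal.Quotient.mk (Ideal.span ({n} : Set R)) a) →
      m.lc (ga k) ∣ Ideal.Quotient.mk (Ideal.span ({n} : Set R)) a ∧
      ¬ (Ideal.Quotient.mk (Ideal.span ({n} : Set R)) a ∣ m.lc (ga k)))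
    (hlcb : ∀ l, gb l ≠ C (Ideal.Quotient.mk (Ideal.span ({n} : Set R)) b) →
      m.lc (gb l) ∣ Ideal.Quotient.mk (Ideal.span ({n} : Set R)) b ∧
      ¬ (Ideal.Quotient.mk (Ideal.span ({n} : Set R)) b ∣ m.lc (gb l))) :
    m.IsStrongGroebnerBasis
      { f | ∃ k : K, ∃ l : L, f =
        monomial (m.lm (ga k) ⊔ m.lm (gb l) - m.lm (gb l))
          (Ideal.Quotient.mk (Ideal.span ({n} : Set R)) (u * a) * m.lc (ga k)) * gb l
        + monomial (m.lm (ga k) ⊔ m.lm (gb l) - m.lm (ga k))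
          (Ideal.Quotient.mk (Ideal.span ({n} : Set R)) (v * b) * m.lc (gb l)) * ga k }
      I := by
  have hS := isCRTSplitting_quotient hnab huv hφa hφb
  have ha : Ideal.Quotient.mk _ a ∣ Ideal.Quotient.mk (Ideal.span ({n} : Set R)) (u * a) :=
    map_dvd _ (dvd_mul_left a u)
  have hb : Ideal.Quotient.mk _ b ∣ Ideal.Quotient.mk (Ideal.span ({n} : Set R)) (v * b) :=
    map_dvd _ (dvd_mul_left b v)
  refine ⟨?_, fun f hf hf₀ => ?_⟩
  · rintro _ ⟨k, l, rfl⟩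
    exact hS.recombination_mem m (hGa.1 _ ⟨_, ⟨k, rfl⟩, rfl⟩) (hGb.1 _ ⟨_, ⟨l, rfl⟩, rfl⟩)
  obtain ⟨k, hk_lm, hk_dvd, hk_lc⟩ := hGa.exists_lm_le_and_map_lc_dvd haGa
    (by rw [hφa, Ideal.Quotient.mk_singleton_self])
    (fun _ hx => ha.trans (hS.fst_dvd_of_map₁_eq_zero hx)) hlca hf
  obtain ⟨l, hl_lm, hl_dvd, hl_lc⟩ := hGb.exists_lm_le_and_map_lc_dvd hbGb
    (by rw [hφb, Ideal.Quotient.mk_singleton_self])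
    (fun _ hx => hb.trans (hS.symm.fst_dvd_of_map₁_eq_zero hx)) hlcb hf
  exact ⟨_, ⟨k, l, rfl⟩, hS.recombination_ne_zero_and_lm_le_and_lc_dvd m hf₀ hk_lm hl_lm
    hk_dvd (hS.isUnit_map₂_of_dvd_fst (hk_lc.trans ha))
    hl_dvd (hS.symm.isUnit_map₂_of_dvd_fst (hl_lc.trans hb))⟩

/-- Recombination over the quotient `S = R/nR` of a PID, for a coprime factorization
`n = a·b` with `u·a + v·b = 1`: given strong Gröbner bases of the images of `I` in
`(R/aR)[x]` and `(R/bR)[x]` (normalized as stated, and containing the constants `ā`, `b̄`),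
the recombined polynomials `f_{k,l}` form a strong Gröbner basis of `I ⊆ S[x]`. -/
theorem strongGroebnerBasis_recombination_quotient {σ R : Type*} [CommRing R] [IsDomain R]
    [IsPrincipalIdealRing R] [Finite σ] (m : MonomialOrder σ)
    (n a b u v : R) (hn : n ≠ 0) (hnab : n = a * b) (huv : u * a + v * b = 1)
    (φa : (R ⧸ Ideal.span ({n} : Set R)) →+* R ⧸ Ideal.span ({a} : Set R))
    (hφa : ∀ r : R, φa (Ideal.Quotient.mk _ r) = Ideal.Quotient.mk _ r)
    (φb : (R ⧸ Ideal.span ({n} : Set R)) →+* R ⧸ Ideal.span ({b} : Set R))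
    (hφb : ∀ r : R, φb (Ideal.Quotient.mk _ r) = Ideal.Quotient.mk _ r)
    (I : Ideal (MvPolynomial σ (R ⧸ Ideal.span ({n} : Set R))))
    {K L : Type*} [Finite K] [Finite L]
    (ga : K → MvPolynomial σ (R ⧸ Ideal.span ({n} : Set R)))
    (gb : L → MvPolynomial σ (R ⧸ Ideal.span ({n} : Set R)))
    (hga0 : ∀ k, ga k ≠ 0) (hgb0 : ∀ l, gb l ≠ 0)
    (hGa : m.IsStrongGroebnerBasis ((fun f => MvPolynomial.map φa f) '' Set.range ga)
      (I.map (MvPolynomial.map φa)))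
    (hGb : m.IsStrongGroebnerBasis ((fun f => MvPolynomial.map φb f) '' Set.range gb)
      (I.map (MvPolynomial.map φb)))
    (haGa : ∃ k, ga k = C (Ideal.Quotient.mk (Ideal.span ({n} : Set R)) a))
    (hbGb : ∃ l, gb l = C (Ideal.Quotient.mk (Ideal.span ({n} : Set R)) b))
    (hlca : ∀ k, ga k ≠ C (Ideal.Quotient.mk (Ideal.span ({n} : Set R)) a) →
      m.lc (ga k) ∣ Ideal.Quotient.mk (Ideal.span ({n} : Set R)) a ∧
      ¬ (Ideal.Quotient.mk (Ideal.span ({n} : Set R)) a ∣ m.lc (ga k)))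
    (hlcb : ∀ l, gb l ≠ C (Ideal.Quotient.mk (Ideal.span ({n} : Set R)) b) →
      m.lc (gb l) ∣ Ideal.Quotient.mk (Ideal.span ({n} : Set R)) b ∧
      ¬ (Ideal.Quotient.mk (Ideal.span ({n} : Set R)) b ∣ m.lc (gb l))) :
    m.IsStrongGroebnerBasis
      { f | ∃ k : K, ∃ l : L, f =
        monomial (m.lm (ga k) ⊔ m.lm (gb l) - m.lm (gb l))
          (Ideal.Quotient.mk (Ideal.span ({n} : Set R)) (u * a) * m.lc (ga k)) * gb l
        + monomial (m.lm (ga k) ⊔ m.lm (gb l) - m.lm (ga k))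
          (Ideal.Quotient.mk (Ideal.span ({n} : Set R)) (v * b) * m.lc (gb l)) * ga k }
      I :=
  strongGroebnerBasis_recombination_quotient_general m n a b u v hnab huv φa hφa φb hφb I ga gb hGa
    hGb haGa hbGb hlca hlcb
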